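/- arXiv:1704.08625 — 7 statements merged into one kernel-verified Lean document; each statement's English description precedes it below -/
import Mathlib

section
/- If a policy {C_i}_{i=1}^L maximizes the hit probability P_hit, and some item x belongs to more than one set C_i, then the modified policy obtained by removing x from all sets containing it except one of smallest cardinality achieves a hit probability at least as large (hence still maximal). Consequently there exists an optimal policy with pairwise disjoint blocks. -/
noncomputable def Phit (J : ℕ) (a Pbar : ℕ → ℝ) {L : ℕ} (C : Fin L → Finset ℕ) : ℝ :=
  ∑ j ∈ Finset.Icc 1 J, a j *
    (if h : (Finset.univ.filter (fun i => j ∈ C i)).Nonempty then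
      Pbar ((Finset.univ.filter (fun i => j ∈ C i)).inf' h (fun i => (C i).card))
    else 0)

theorem key_lemma (J : ℕ) (a Pbar : ℕ → ℝ) {L : ℕ}
    (ha : ∀ j, 0 ≤ a j) (hP : Antitone Pbar)
    (C : Fin L → Finset ℕ) (x : ℕ) (i₀ : Fin L) (hx₀ : x ∈ C i₀)
    (hmin : ∀ i, x ∈ C i → (C i₀).card ≤ (C i).card) :
    Phit J a Pbar C ≤ Phit J a Pbar (fun i => if i = i₀ then C i else (C i).erase x) := by
  unfold Phit
  apply Finset.sum_le_sum
  intro j hj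
  apply mul_le_mul_of_nonneg_left _ (ha j)
  set D : Fin L → Finset ℕ := fun i => if i = i₀ then C i else (C i).erase x with hD
  by_cases hjx : j = x
  · subst hjx
    have hfilt : (Finset.univ.filter (fun i => j ∈ D i)) = {i₀} := by
      ext i
      simp only [Finset.mem_filter, Finset.mem_univ, true_and, Finset.mem_singleton, hD]
      constructor
      · intro h
        by_contra hii
        simp [hii] at h
      · intro h; subst h; simp [hx₀]
    have hC : (Finset.univ.filter (fun i => j ∈ C i)).Nonempty :=
      ⟨i₀, by simp [hx₀]⟩
    rw [hfilt, dif_pos hC, dif_pos (Finset.singleton_nonempty i₀)]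
    have h1 : (Finset.univ.filter (fun i => j ∈ C i)).inf' hC (fun i => (C i).card)
        = (C i₀).card := by
      apply le_antisymm
      · exact Finset.inf'_le _ (by simp [hx₀])
      · apply Finset.le_inf'
        intro i hi
        exact hmin i (by simpa using hi)
    have h2 : ({i₀} : Finset (Fin L)).inf' (Finset.singleton_nonempty i₀)
        (fun i => (D i).card) = (C i₀).card := by
      simp [hD]
    rw [h1, h2]
  · have hfilt : (Finset.univ.filter (fun i => j ∈ D i))
        = (Finset.univ.filter (fun i => j ∈ C i)) := by
      ext i
      simp only [Finset.mem_filter, Finset.mem_univ, true_and, hD]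
      split_ifs with h
      · rfl
      · simp [Finset.mem_erase, hjx]
    rw [hfilt]
    by_cases hC : (Finset.univ.filter (fun i => j ∈ C i)).Nonempty
    · rw [dif_pos hC, dif_pos hC]
      apply hP
      obtain ⟨i', hi', heq⟩ := Finset.exists_mem_eq_inf' hC (fun i => (C i).card)
      rw [heq]
      refine le_trans (Finset.inf'_le _ hi') ?_
      simp only [hD]
      split_ifs with h
      · exact le_rfl
      · exact Finset.card_le_card (Finset.erase_subset _ _)
    · rw [dif_neg hC, dif_neg hC]

/-- If a policy maximizes the hit probability and an item `x` belongs to more than one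
block, then removing `x` from all blocks containing it except one of smallest cardinality
does not decrease the hit probability; consequently there exists an optimal policy with
pairwise disjoint blocks. -/
theorem exists_optimal_disjoint (J L : ℕ) (a Pbar : ℕ → ℝ)
    (ha : ∀ j, 0 ≤ a j) (hP : Antitone Pbar) (hP0 : ∀ k, 0 ≤ Pbar k)
    (C : Fin L → Finset ℕ) (hsub : ∀ i, C i ⊆ Finset.Icc 1 J)
    (hmax : ∀ D : Fin L → Finset ℕ, (∀ i, D i ⊆ Finset.Icc 1 J) →
      Phit J a Pbar D ≤ Phit J a Pbar C)
    (x : ℕ) (i₀ i₁ : Fin L) (hne : i₀ ≠ i₁) (hx₀ : x ∈ C i₀) (hx₁ : x ∈ C i₁)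
    (hmin : ∀ i, x ∈ C i → (C i₀).card ≤ (C i).card) :
    Phit J a Pbar C ≤ Phit J a Pbar (fun i => if i = i₀ then C i else (C i).erase x) ∧
    ∃ D : Fin L → Finset ℕ, (∀ i, D i ⊆ Finset.Icc 1 J) ∧
      (∀ i i', i ≠ i' → Disjoint (D i) (D i')) ∧
      Phit J a Pbar D = Phit J a Pbar C := by

  constructor
  · exact key_lemma J a Pbar ha hP C x i₀ hx₀ hmin
  · suffices H : ∀ n (D : Fin L → Finset ℕ), (∑ i, (D i).card) ≤ n →
        (∀ i, D i ⊆ Finset.Icc 1 J) → Phit J a Pbar D = Phit J a Pbar C →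
        ∃ E : Fin L → Finset ℕ, (∀ i, E i ⊆ Finset.Icc 1 J) ∧
          (∀ i i', i ≠ i' → Disjoint (E i) (E i')) ∧
          Phit J a Pbar E = Phit J a Pbar C by
      exact H (∑ i, (C i).card) C le_rfl hsub rfl
    intro n
    induction n with
    | zero =>
      intro D hsum hDsub hDeq
      refine ⟨D, hDsub, ?_, hDeq⟩
      intro i i' _
      have h0 : ∀ k ∈ Finset.univ, (D k).card = 0 :=
        (Finset.sum_eq_zero_iff).mp (Nat.le_zero.mp hsum)
      simp [Finset.card_eq_zero.mp (h0 i (Finset.mem_univ i))]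
    | succ n ih =>
      intro D hsum hDsub hDeq
      by_cases hdisj : ∀ i i', i ≠ i' → Disjoint (D i) (D i')
      · exact ⟨D, hDsub, hdisj, hDeq⟩
      · push_neg at hdisj
        obtain ⟨i, i', hii', hnd⟩ := hdisj
        obtain ⟨y, hy, hy'⟩ := Finset.not_disjoint_iff.mp hnd
        have hSne : (Finset.univ.filter (fun i => y ∈ D i)).Nonempty :=
          ⟨i, by simp [hy]⟩
        obtain ⟨j₀, hj₀, hj₀min⟩ := Finset.exists_min_image _ (fun i => (D i).card) hSne
        have hyj₀ : y ∈ D j₀ := by simpa using hj₀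
        have hmin' : ∀ k, y ∈ D k → (D j₀).card ≤ (D k).card := fun k hk =>
          hj₀min k (by simp [hk])
        set D' : Fin L → Finset ℕ := fun k => if k = j₀ then D k else (D k).erase y with hD'
        have hD'sub : ∀ k, D' k ⊆ Finset.Icc 1 J := by
          intro k
          simp only [hD']
          split_ifs
          · exact hDsub k
          · exact (Finset.erase_subset _ _).trans (hDsub k)
        have hle : Phit J a Pbar D ≤ Phit J a Pbar D' :=
          key_lemma J a Pbar ha hP D y j₀ hyj₀ hmin'
        have hD'eq : Phit J a Pbar D' = Phit J a Pbar C :=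
          le_antisymm (hmax D' hD'sub) (hDeq ▸ hle)
        -- there is some block ≠ j₀ containing y
        have hex : ∃ k, k ≠ j₀ ∧ y ∈ D k := by
          by_cases h : i = j₀
          · exact ⟨i', fun hh => hii' (by rw [h, ← hh]), hy'⟩
          · exact ⟨i, h, hy⟩
        obtain ⟨k₀, hk₀, hyk₀⟩ := hex
        have hsum' : (∑ i, (D' i).card) < ∑ i, (D i).card := by
          apply Finset.sum_lt_sum (f := fun i => (D' i).card)
          · intro k _
            simp only [hD']
            split_ifs
            · exact le_rfl
            · exact Finset.card_le_card (Finset.erase_subset _ _)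
          · refine ⟨k₀, Finset.mem_univ _, ?_⟩
            simp only [hD', if_neg hk₀]
            exact Finset.card_erase_lt_of_mem hyk₀
        exact ih D' (by omega) hD'sub hD'eq
end

section
/- Suppose {C_i}_{i=1}^L are pairwise disjoint subsets of {1,...,J}, and suppose x ∈ C_i, y ∈ C_j with |C_i| ≤ |C_j| and x > y (so a_x ≤ a_y). Then swapping x and y between the two blocks does not decrease the hit probability P_hit({C_i}) = Σ_k A(C_k) P̄(|C_k|). -/
/-- For pairwise disjoint blocks, if `x ∈ C i`, `y ∈ C j` with `|C i| ≤ |C j|` and `y < x`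
(so `a x ≤ a y` by nonincreasing popularities), swapping `x` and `y` between the two
blocks does not decrease the hit probability `∑ₖ A(C_k) P̄(|C_k|)`. -/
theorem swap_does_not_decrease (L : ℕ) (a Pbar : ℕ → ℝ)
    (ha : ∀ m n : ℕ, m ≤ n → a n ≤ a m) (hP : Antitone Pbar)
    (C : Fin L → Finset ℕ)
    (hdisj : ∀ i i', i ≠ i' → Disjoint (C i) (C i'))
    (i j : Fin L) (hij : i ≠ j) (x y : ℕ)
    (hx : x ∈ C i) (hy : y ∈ C j)
    (hcard : (C i).card ≤ (C j).card) (hxy : y < x) :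
    (∑ k : Fin L, (∑ m ∈ C k, a m) * Pbar ((C k).card)) ≤
      ∑ k : Fin L,
        (∑ m ∈ (if k = i then insert y ((C i).erase x)
                 else if k = j then insert x ((C j).erase y) else C k), a m) *
          Pbar ((if k = i then insert y ((C i).erase x)
                 else if k = j then insert x ((C j).erase y) else C k).card) := by
  classical
  have hyx : a x ≤ a y := ha y x hxy.le
  have hPij : Pbar ((C j).card) ≤ Pbar ((C i).card) := hP hcard
  have hyCi : y ∉ C i := fun h => Finset.disjoint_left.mp (hdisj i j hij) h hy
  have hxCj : x ∉ C j := fun h => Finset.disjoint_left.mp (hdisj j i hij.symm) h hx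
  have h1 : y ∉ (C i).erase x := fun h => hyCi (Finset.mem_erase.mp h).2
  have h2 : x ∉ (C j).erase y := fun h => hxCj (Finset.mem_erase.mp h).2
  have hci : (insert y ((C i).erase x)).card = (C i).card := by
    rw [Finset.card_insert_of_notMem h1, Finset.card_erase_of_mem hx]
    exact Nat.succ_pred_eq_of_pos (Finset.card_pos.mpr ⟨x, hx⟩)
  have hcj : (insert x ((C j).erase y)).card = (C j).card := by
    rw [Finset.card_insert_of_notMem h2, Finset.card_erase_of_mem hy]
    exact Nat.succ_pred_eq_of_pos (Finset.card_pos.mpr ⟨y, hy⟩)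
  have hsi : ∑ m ∈ insert y ((C i).erase x), a m = (∑ m ∈ C i, a m) - a x + a y := by
    rw [Finset.sum_insert h1, Finset.sum_erase_eq_sub hx]; ring
  have hsj : ∑ m ∈ insert x ((C j).erase y), a m = (∑ m ∈ C j, a m) - a y + a x := by
    rw [Finset.sum_insert h2, Finset.sum_erase_eq_sub hy]; ring
  rw [← sub_nonneg, ← Finset.sum_sub_distrib]
  rw [← Finset.sum_subset (Finset.subset_univ ({i, j} : Finset (Fin L)))
      (fun k _ hk => by
        simp only [Finset.mem_insert, Finset.mem_singleton, not_or] at hk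
        simp [hk.1, hk.2])]
  rw [Finset.sum_pair hij]
  simp only [if_pos rfl, if_true, if_neg hij, if_neg hij.symm, hci, hcj, hsi, hsj]
  nlinarith [mul_nonneg (sub_nonneg.mpr hyx) (sub_nonneg.mpr hPij)]
end

section
/- For disjoint blocks indexed so that |C_1| ≤ ... ≤ |C_L| with union {1,...,j_max}, there exists an optimal policy in which all elements of C_i precede all elements of C_{i+1}; i.e., C_i is the interval [m_1+...+m_{i-1}+1, m_1+...+m_i] where m_i = |C_i|. Hence the maximum of P_hit over all policies equals max over 1 ≤ m_1 ≤ ... ≤ m_L of Σ_{k=1}^L A([m_1+...+m_{k-1}+1, m_1+...+m_k]) · P̄(m_k). -/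
/-- Partial sum `m₁ + … + m_{k-1}` of block sizes. -/
def psum {L : ℕ} (m : Fin L → ℕ) (k : Fin L) : ℕ :=
  ∑ i ∈ Finset.univ.filter (fun i => i < k), m i

/-- The `k`-th structured (interval) block `[m₁+…+m_{k-1}+1, m₁+…+m_k]`. -/
def blockOf {L : ℕ} (m : Fin L → ℕ) (k : Fin L) : Finset ℕ :=
  Finset.Icc (psum m k + 1) (psum m k + m k)

open Finset

section Aux

variable {L : ℕ}

lemma psum_add_eq_sum_insert (m : Fin L → ℕ) (k : Fin L) :
    psum m k + m k = ∑ i ∈ insert k (univ.filter (fun i => i < k)), m i := by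
  rw [Finset.sum_insert (by simp)]
  exact add_comm _ _

lemma psum_add_le_psum (m : Fin L → ℕ) {k k' : Fin L} (h : k < k') :
    psum m k + m k ≤ psum m k' := by
  rw [psum_add_eq_sum_insert]
  apply Finset.sum_le_sum_of_subset
  intro i hi
  simp only [Finset.mem_insert, Finset.mem_filter, Finset.mem_univ, true_and] at hi ⊢
  rcases hi with rfl | hi
  · exact h
  · exact hi.trans h

lemma psum_add_le_sum (m : Fin L → ℕ) (k : Fin L) :
    psum m k + m k ≤ ∑ i, m i := by
  rw [psum_add_eq_sum_insert]
  exact Finset.sum_le_sum_of_subset (Finset.subset_univ _)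

lemma mem_blockOf {m : Fin L → ℕ} {k : Fin L} {p : ℕ} :
    p ∈ blockOf m k ↔ psum m k + 1 ≤ p ∧ p ≤ psum m k + m k := Finset.mem_Icc

lemma blockOf_disjoint (m : Fin L → ℕ) {k k' : Fin L} (h : k ≠ k') :
    Disjoint (blockOf m k) (blockOf m k') := by
  rw [Finset.disjoint_left]
  intro p hp hp'
  rw [mem_blockOf] at hp hp'
  rcases lt_or_gt_of_ne h with hlt | hlt
  · have := psum_add_le_psum m hlt
    omega
  · have := psum_add_le_psum m hlt
    omega

lemma card_blockOf (m : Fin L → ℕ) (k : Fin L) : (blockOf m k).card = m k := by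
  simp [blockOf, Nat.card_Icc]

lemma blockOf_subset_Icc {J : ℕ} (m : Fin L → ℕ) (hm : ∑ i, m i ≤ J) (k : Fin L) :
    blockOf m k ⊆ Finset.Icc 1 J := by
  intro p hp
  rw [mem_blockOf] at hp
  have := psum_add_le_sum m k
  exact Finset.mem_Icc.2 ⟨by omega, by omega⟩

lemma exists_mem_blockOf (hL : 0 < L) (m : Fin L → ℕ) {p : ℕ} (h1 : 1 ≤ p)
    (h2 : p ≤ ∑ i, m i) : ∃ k, p ∈ blockOf m k := by
  classical
  have h0 : psum m ⟨0, hL⟩ = 0 := by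
    unfold psum
    rw [Finset.sum_eq_zero]
    intro i hi
    simp only [Finset.mem_filter, Finset.mem_univ, true_and] at hi
    exact absurd hi (by simp [Fin.lt_def])
  set s : Finset (Fin L) := univ.filter (fun k => psum m k < p) with hs
  have hne : s.Nonempty := ⟨⟨0, hL⟩, by simp [hs, h0, h1]; omega⟩
  set k := s.max' hne with hk
  have hkmem : k ∈ s := s.max'_mem hne
  have hklt : psum m k < p := by
    have := hkmem
    simp only [hs, Finset.mem_filter] at this
    exact this.2
  refine ⟨k, mem_blockOf.2 ⟨by omega, ?_⟩⟩
  by_cases hsucc : k.val + 1 < L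
  · have hnotmem : ¬ psum m ⟨k.val + 1, hsucc⟩ < p := by
      intro hlt
      have hmem : (⟨k.val + 1, hsucc⟩ : Fin L) ∈ s := by simp [hs, hlt]
      have := s.le_max' _ hmem
      rw [← hk] at this
      simp only [Fin.le_def] at this
      omega
    have hps : psum m ⟨k.val + 1, hsucc⟩ = psum m k + m k := by
      rw [psum_add_eq_sum_insert]
      unfold psum
      congr 1
      ext i
      simp only [Finset.mem_filter, Finset.mem_univ, true_and, Finset.mem_insert,
        Fin.lt_def, Fin.ext_iff]
      omega
    omega
  · have huniv : (univ : Finset (Fin L)) = insert k (univ.filter (fun i => i < k)) := by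
      ext i
      simp only [Finset.mem_univ, true_iff, Finset.mem_insert, Finset.mem_filter, true_and,
        Fin.lt_def, Fin.ext_iff]
      have := i.isLt
      omega
    have : ∑ i, m i = psum m k + m k := by
      rw [psum_add_eq_sum_insert]
      exact Finset.sum_congr huniv (fun _ _ => rfl)
    omega

end Aux
section Aux2

variable {L : ℕ}

/-- The "level profile" of the structured policy: position `p` gets value `P̄(m k)`
where `k` is the block containing `p`, and `0` if no block contains `p`. -/
noncomputable def uFn (Pbar : ℕ → ℝ) (m : Fin L → ℕ) (p : ℕ) : ℝ :=
  ∑ k, if p ∈ blockOf m k then Pbar (m k) else 0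

lemma uFn_nonneg (Pbar : ℕ → ℝ) (hP0 : ∀ k, 0 ≤ Pbar k) (m : Fin L → ℕ) (p : ℕ) :
    0 ≤ uFn Pbar m p := by
  apply Finset.sum_nonneg
  intro k _
  by_cases h : p ∈ blockOf m k <;> simp [h, hP0]

lemma uFn_eq (Pbar : ℕ → ℝ) (m : Fin L → ℕ) {p : ℕ} {k : Fin L} (hp : p ∈ blockOf m k) :
    uFn Pbar m p = Pbar (m k) := by
  unfold uFn
  rw [Finset.sum_eq_single_of_mem k (Finset.mem_univ k)]
  · rw [if_pos hp]
  · intro k' _ hk'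
    rw [if_neg]
    exact fun hp' => (Finset.disjoint_left.1 (blockOf_disjoint m hk') hp') hp

lemma uFn_eq_zero (Pbar : ℕ → ℝ) (m : Fin L → ℕ) {p : ℕ} (hp : ∀ k, p ∉ blockOf m k) :
    uFn Pbar m p = 0 := by
  unfold uFn
  exact Finset.sum_eq_zero (fun k _ => if_neg (hp k))

lemma sum_a_uFn (J : ℕ) (a Pbar : ℕ → ℝ) (m : Fin L → ℕ) (hm : ∑ i, m i ≤ J) :
    ∑ p ∈ Finset.Icc 1 J, a p * uFn Pbar m p
      = ∑ k : Fin L, (∑ j ∈ blockOf m k, a j) * Pbar (m k) := by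
  unfold uFn
  simp_rw [Finset.mul_sum, mul_ite, mul_zero]
  rw [Finset.sum_comm]
  apply Finset.sum_congr rfl
  intro k _
  rw [Finset.sum_mul, ← Finset.sum_filter]
  apply Finset.sum_congr
  · rw [Finset.filter_mem_eq_inter, Finset.inter_eq_right]
    exact blockOf_subset_Icc m hm k
  · intro j _; rfl

end Aux2
section Aux3

variable {L : ℕ}

lemma Phit_blockOf (J : ℕ) (a Pbar : ℕ → ℝ) (m : Fin L → ℕ) :
    Phit J a Pbar (blockOf m) = ∑ p ∈ Finset.Icc 1 J, a p * uFn Pbar m p := by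
  classical
  unfold Phit
  apply Finset.sum_congr rfl
  intro j _
  congr 1
  by_cases hcov : ∃ k, j ∈ blockOf m k
  · obtain ⟨k, hk⟩ := hcov
    have hfilt : Finset.univ.filter (fun i => j ∈ blockOf m i) = {k} := by
      ext i
      simp only [Finset.mem_filter, Finset.mem_univ, true_and, Finset.mem_singleton]
      constructor
      · intro hi
        by_contra hne
        exact (Finset.disjoint_left.1 (blockOf_disjoint m hne) hi) hk
      · rintro rfl; exact hk
    rw [uFn_eq Pbar m hk]
    simp only [hfilt]
    rw [dif_pos (Finset.singleton_nonempty k)]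
    rw [Finset.inf'_singleton, card_blockOf]
  · push_neg at hcov
    have hfilt : Finset.univ.filter (fun i => j ∈ blockOf m i) = ∅ := by
      ext i; simp [hcov i]
    rw [uFn_eq_zero Pbar m hcov]
    simp only [hfilt]
    rw [dif_neg (by simp)]

lemma m_le_of_mem_block {m : Fin L → ℕ} (hmono : Monotone m) {t p : ℕ} {k : Fin L}
    (hp : p ∈ blockOf m k)
    (hple : p ≤ ∑ i ∈ Finset.univ.filter (fun i => m i ≤ t), m i) : m k ≤ t := by
  by_contra h
  push_neg at h
  have hsub : Finset.univ.filter (fun i => m i ≤ t) ⊆ Finset.univ.filter (fun i => i < k) := by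
    intro i hi
    simp only [Finset.mem_filter, Finset.mem_univ, true_and] at hi ⊢
    by_contra hik
    push_neg at hik
    exact absurd (hmono hik) (by omega)
  have hle : ∑ i ∈ Finset.univ.filter (fun i => m i ≤ t), m i ≤ psum m k :=
    Finset.sum_le_sum_of_subset hsub
  rw [mem_blockOf] at hp
  omega

lemma monovaryOn_a_uFn (J : ℕ) (hL : 0 < L) (a Pbar : ℕ → ℝ)
    (ha : ∀ p q : ℕ, p ≤ q → a q ≤ a p)
    (hP : Antitone Pbar) (hP0 : ∀ k, 0 ≤ Pbar k)
    (m : Fin L → ℕ) (hmono : Monotone m) :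
    MonovaryOn a (uFn Pbar m) ↑(Finset.Icc 1 J) := by
  intro p hp q hq hlt
  -- hlt : uFn p < uFn q ; goal : a p ≤ a q ; show q ≤ p
  simp only [Finset.coe_Icc, Set.mem_Icc] at hp hq
  apply ha q p
  by_cases hqb : ∃ kq, q ∈ blockOf m kq
  · obtain ⟨kq, hkq⟩ := hqb
    rw [uFn_eq Pbar m hkq] at hlt
    by_cases hpb : ∃ kp, p ∈ blockOf m kp
    · obtain ⟨kp, hkp⟩ := hpb
      rw [uFn_eq Pbar m hkp] at hlt
      have hmlt : m kq < m kp := by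
        by_contra hc
        push_neg at hc
        exact absurd (hP hc) (not_le.2 hlt)
      have hklt : kq < kp := by
        by_contra hc
        push_neg at hc
        exact absurd (hmono hc) (by omega)
      have h1 := psum_add_le_psum m hklt
      rw [mem_blockOf] at hkp hkq
      omega
    · push_neg at hpb
      have hpgt : ∑ i, m i < p := by
        by_contra hc
        push_neg at hc
        obtain ⟨k, hk⟩ := exists_mem_blockOf hL m hp.1 hc
        exact hpb k hk
      have h1 := psum_add_le_sum m kq
      rw [mem_blockOf] at hkq
      omega
  · push_neg at hqb
    rw [uFn_eq_zero Pbar m hqb] at hlt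
    exact absurd (uFn_nonneg Pbar hP0 m p) (not_le.2 hlt)

end Aux3
section Core

lemma core_bound (J L : ℕ) (hL : 0 < L) (a Pbar : ℕ → ℝ) (ha0 : ∀ j, 0 ≤ a j)
    (ha : ∀ p q : ℕ, p ≤ q → a q ≤ a p) (hP : Antitone Pbar) (hP0 : ∀ k, 0 ≤ Pbar k)
    (C : Fin L → Finset ℕ) (hsub : ∀ i, C i ⊆ Finset.Icc 1 J)
    (hdisj : ∀ i i' : Fin L, i ≠ i' → Disjoint (C i) (C i'))
    (hne : ∀ i, (C i).Nonempty) :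
    ∃ m : Fin L → ℕ, (∀ i, 1 ≤ m i) ∧ Monotone m ∧ (∑ i, m i) ≤ J ∧
      Phit J a Pbar C ≤ ∑ k : Fin L, (∑ j ∈ blockOf m k, a j) * Pbar (m k) := by
  classical
  set c : Fin L → ℕ := fun i => (C i).card with hc
  set π := Tuple.sort c with hπ
  set m : Fin L → ℕ := c ∘ π with hm
  have hm1 : ∀ k, 1 ≤ m k := fun k => Finset.card_pos.2 (hne (π k))
  have hmono : Monotone m := Tuple.monotone_sort c
  have hsum_eq : ∑ k, m k = ∑ i, c i := Equiv.sum_comp π c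
  have hsumJ : ∑ i, c i ≤ J := by
    have h1 : ∑ i, c i = (Finset.univ.biUnion C).card :=
      (Finset.card_biUnion (fun i _ i' _ h => hdisj i i' h)).symm
    have h2 : (Finset.univ.biUnion C).card ≤ (Finset.Icc 1 J).card := by
      apply Finset.card_le_card
      intro j hj
      obtain ⟨i, _, hji⟩ := Finset.mem_biUnion.1 hj
      exact hsub i hji
    rw [Nat.card_Icc] at h2
    omega
  have hmJ : ∑ k, m k ≤ J := by rw [hsum_eq]; exact hsumJ
  refine ⟨m, hm1, hmono, hmJ, ?_⟩
  -- covered items, assignment to (unique) block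
  set V : Finset ℕ := (Finset.Icc 1 J).filter (fun j => ∃ i, j ∈ C i) with hV
  set ι : ℕ → Fin L := fun j => if h : ∃ i, j ∈ C i then h.choose else ⟨0, hL⟩ with hι
  have hιmem : ∀ j, (∃ i, j ∈ C i) → j ∈ C (ι j) := by
    intro j h
    simp only [hι, dif_pos h]
    exact h.choose_spec
  have hιuniq : ∀ j i, j ∈ C i → i = ι j := by
    intro j i hj
    have h : ∃ i, j ∈ C i := ⟨i, hj⟩
    have h2 := hιmem j h
    by_contra hne'
    exact (Finset.disjoint_left.1 (hdisj i (ι j) hne') hj) h2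
  set g : ℕ → ℕ := fun j => c (ι j) with hg
  -- Phit formula for disjoint policies
  have hPhit : Phit J a Pbar C = ∑ j ∈ V, a j * Pbar (g j) := by
    unfold Phit
    rw [hV, Finset.sum_filter]
    apply Finset.sum_congr rfl
    intro j _
    by_cases h : ∃ i, j ∈ C i
    · have hfilt : Finset.univ.filter (fun i => j ∈ C i) = {ι j} := by
        ext i
        simp only [Finset.mem_filter, Finset.mem_univ, true_and, Finset.mem_singleton]
        exact ⟨fun hi => hιuniq j i hi, fun he => he ▸ hιmem j h⟩
      rw [if_pos h]
      simp only [hfilt]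
      rw [dif_pos (Finset.singleton_nonempty _), Finset.inf'_singleton]
    · have hfilt : Finset.univ.filter (fun i => j ∈ C i) = ∅ := by
        ext i
        push_neg at h
        simp [h i]
      rw [if_neg h]
      simp only [hfilt]
      rw [dif_neg (by simp), mul_zero]
  -- the key/rank machinery
  set key : ℕ → ℕ := fun j => g j * (J + 1) + j with hkey
  have hjJ : ∀ j ∈ V, j ≤ J := fun j hj => (Finset.mem_Icc.1 (Finset.mem_filter.1 hj).1).2
  have hkey_inj : ∀ j ∈ V, ∀ j' ∈ V, key j = key j' → j = j' := by
    intro j hj j' hj' he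
    have hmod : key j % (J + 1) = key j' % (J + 1) := by rw [he]
    simp only [hkey] at hmod
    rw [mul_comm (g j), mul_comm (g j'), Nat.mul_add_mod, Nat.mul_add_mod] at hmod
    rw [Nat.mod_eq_of_lt (by have := hjJ j hj; omega),
      Nat.mod_eq_of_lt (by have := hjJ j' hj'; omega)] at hmod
    exact hmod
  have hkey_g : ∀ j ∈ V, ∀ j' ∈ V, key j' ≤ key j → g j' ≤ g j := by
    intro j hj j' hj' hle
    by_contra hgt
    push_neg at hgt
    have h1 : (g j + 1) * (J + 1) ≤ g j' * (J + 1) := Nat.mul_le_mul_right _ hgt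
    rw [add_mul, one_mul] at h1
    simp only [hkey] at hle
    have h2 := hjJ j hj
    generalize g j * (J + 1) = X at h1 hle
    generalize g j' * (J + 1) = Y at h1 hle
    omega
  set r : ℕ → ℕ := fun j => (V.filter (fun j' => key j' ≤ key j)).card with hr
  have hr_pos : ∀ j ∈ V, 1 ≤ r j := fun j hj =>
    Finset.card_pos.2 ⟨j, Finset.mem_filter.2 ⟨hj, le_refl _⟩⟩
  have hr_lt : ∀ j ∈ V, ∀ j' ∈ V, key j < key j' → r j < r j' := by
    intro j hj j' hj' hlt
    apply Finset.card_lt_card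
    rw [Finset.ssubset_iff_of_subset]
    · exact ⟨j', Finset.mem_filter.2 ⟨hj', le_refl _⟩, fun hmem =>
        absurd (Finset.mem_filter.1 hmem).2 (by omega)⟩
    · intro x hx
      rw [Finset.mem_filter] at hx ⊢
      exact ⟨hx.1, hx.2.trans (le_of_lt hlt)⟩
  have hr_inj : ∀ j ∈ V, ∀ j' ∈ V, r j = r j' → j = j' := by
    intro j hj j' hj' he
    rcases lt_trichotomy (key j) (key j') with h | h | h
    · exact absurd he (Nat.ne_of_lt (hr_lt j hj j' hj' h))
    · exact hkey_inj j hj j' hj' h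
    · exact absurd he.symm (Nat.ne_of_lt (hr_lt j' hj' j hj h))
  have hSt : ∀ t, ∑ i ∈ Finset.univ.filter (fun i => c i ≤ t), c i
      = ∑ k ∈ Finset.univ.filter (fun k => m k ≤ t), m k := by
    intro t
    rw [Finset.sum_filter, Finset.sum_filter]
    exact (Equiv.sum_comp π (fun i => if c i ≤ t then c i else 0)).symm
  have hr_le : ∀ j ∈ V, r j ≤ ∑ k ∈ Finset.univ.filter (fun k => m k ≤ g j), m k := by
    intro j hj
    rw [← hSt]
    calc r j ≤ ((Finset.univ.filter (fun i => c i ≤ g j)).biUnion C).card := by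
          apply Finset.card_le_card
          intro j' hj'
          rw [Finset.mem_filter] at hj'
          obtain ⟨hj'V, hj'k⟩ := hj'
          have hcov : ∃ i, j' ∈ C i := (Finset.mem_filter.1 hj'V).2
          exact Finset.mem_biUnion.2 ⟨ι j', Finset.mem_filter.2 ⟨Finset.mem_univ _,
            hkey_g j hj j' hj'V hj'k⟩, hιmem j' hcov⟩
      _ ≤ ∑ i ∈ Finset.univ.filter (fun i => c i ≤ g j), c i := Finset.card_biUnion_le
  have hrblock : ∀ j ∈ V, ∃ k, r j ∈ blockOf m k ∧ m k ≤ g j := by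
    intro j hj
    have h2 : r j ≤ ∑ k, m k :=
      (hr_le j hj).trans (Finset.sum_le_sum_of_subset (Finset.subset_univ _))
    obtain ⟨k, hk⟩ := exists_mem_blockOf hL m (hr_pos j hj) h2
    exact ⟨k, hk, m_le_of_mem_block hmono hk (hr_le j hj)⟩
  have step1 : ∑ j ∈ V, a j * Pbar (g j) ≤ ∑ j ∈ V, a j * uFn Pbar m (r j) := by
    apply Finset.sum_le_sum
    intro j hj
    obtain ⟨k, hk, hmk⟩ := hrblock j hj
    rw [uFn_eq Pbar m hk]
    exact mul_le_mul_of_nonneg_left (hP hmk) (ha0 j)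
  -- build the permutation
  have hVsub : V ⊆ Finset.Icc 1 J := Finset.filter_subset _ _
  have hrIcc : ∀ j ∈ V, r j ∈ Finset.Icc 1 J := by
    intro j hj
    obtain ⟨k, hk, _⟩ := hrblock j hj
    exact blockOf_subset_Icc m hmJ k hk
  set W : Finset ℕ := V.image r with hW
  have hWsub : W ⊆ Finset.Icc 1 J := by
    intro w hw
    obtain ⟨j, hj, rfl⟩ := Finset.mem_image.1 hw
    exact hrIcc j hj
  have hWcard : W.card = V.card := Finset.card_image_of_injOn
    (fun j hj j' hj' h => hr_inj j hj j' hj' h)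
  set A : Finset ℕ := Finset.Icc 1 J \ V with hA
  set B : Finset ℕ := Finset.Icc 1 J \ W with hB
  have hABcard : A.card = B.card := by
    rw [hA, hB, Finset.card_sdiff_of_subset hVsub, Finset.card_sdiff_of_subset hWsub, hWcard]
  set e := Finset.equivOfCardEq hABcard with he
  set ψ : ℕ → ℕ := fun x =>
    if hx : x ∈ V then r x else if hx' : x ∈ A then (e ⟨x, hx'⟩ : ℕ) else x with hψ
  have hψV : ∀ x ∈ V, ψ x = r x := by
    intro x hx
    simp only [hψ, dif_pos hx]
  have hψW : ∀ x ∈ V, ψ x ∈ W := by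
    intro x hx
    rw [hψV x hx]
    exact Finset.mem_image_of_mem r hx
  have hψB : ∀ x, x ∉ V → x ∈ A → ψ x ∈ B := by
    intro x hx hx'
    simp only [hψ, dif_neg hx, dif_pos hx']
    exact (e ⟨x, hx'⟩).2
  have hψout : ∀ x, x ∉ Finset.Icc 1 J → ψ x = x := by
    intro x hx
    have h1 : x ∉ V := fun h => hx (hVsub h)
    have h2 : x ∉ A := fun h => hx (Finset.mem_sdiff.1 h).1
    simp only [hψ, dif_neg h1, dif_neg h2]
  have hAV : ∀ x, x ∈ Finset.Icc 1 J → x ∉ V → x ∈ A := by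
    intro x h1 h2
    exact Finset.mem_sdiff.2 ⟨h1, h2⟩
  have hinj : Function.Injective ψ := by
    intro x y hxy
    by_cases hx : x ∈ V <;> by_cases hy : y ∈ V
    · exact hr_inj x hx y hy (by rwa [hψV x hx, hψV y hy] at hxy)
    · exfalso
      have h1 : ψ x ∈ W := hψW x hx
      by_cases hy' : y ∈ A
      · have h2 : ψ y ∈ B := hψB y hy hy'
        rw [hxy] at h1
        exact (Finset.mem_sdiff.1 h2).2 h1
      · have hyI : y ∉ Finset.Icc 1 J := fun h => hy' (hAV y h hy)
        rw [hψout y hyI] at hxy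
        rw [hxy] at h1
        exact hyI (hWsub h1)
    · exfalso
      have h1 : ψ y ∈ W := hψW y hy
      by_cases hx' : x ∈ A
      · have h2 : ψ x ∈ B := hψB x hx hx'
        rw [← hxy] at h1
        exact (Finset.mem_sdiff.1 h2).2 h1
      · have hxI : x ∉ Finset.Icc 1 J := fun h => hx' (hAV x h hx)
        rw [hψout x hxI] at hxy
        rw [← hxy] at h1
        exact hxI (hWsub h1)
    · by_cases hx' : x ∈ A <;> by_cases hy' : y ∈ A
      · simp only [hψ, dif_neg hx, dif_neg hy, dif_pos hx', dif_pos hy'] at hxy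
        have := e.injective (Subtype.coe_injective hxy)
        exact congrArg Subtype.val this
      · exfalso
        have hyI : y ∉ Finset.Icc 1 J := fun h => hy' (hAV y h hy)
        have h2 : ψ x ∈ B := hψB x hx hx'
        rw [hψout y hyI] at hxy
        rw [hxy] at h2
        exact hyI ((Finset.sdiff_subset) h2)
      · exfalso
        have hxI : x ∉ Finset.Icc 1 J := fun h => hx' (hAV x h hx)
        have h2 : ψ y ∈ B := hψB y hy hy'
        rw [hψout x hxI] at hxy
        rw [← hxy] at h2
        exact hxI ((Finset.sdiff_subset) h2)
      · have hxI : x ∉ Finset.Icc 1 J := fun h => hx' (hAV x h hx)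
        have hyI : y ∉ Finset.Icc 1 J := fun h => hy' (hAV y h hy)
        rwa [hψout x hxI, hψout y hyI] at hxy
  have hsurj : Function.Surjective ψ := by
    intro y
    by_cases hy : y ∈ Finset.Icc 1 J
    · by_cases hyW : y ∈ W
      · obtain ⟨x, hx, hrx⟩ := Finset.mem_image.1 hyW
        exact ⟨x, by rw [hψV x hx, hrx]⟩
      · have hyB : y ∈ B := Finset.mem_sdiff.2 ⟨hy, hyW⟩
        refine ⟨(e.symm ⟨y, hyB⟩ : ℕ), ?_⟩
        have hxA : ((e.symm ⟨y, hyB⟩ : { x // x ∈ A }) : ℕ) ∈ A := (e.symm ⟨y, hyB⟩).2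
        have hxV : ((e.symm ⟨y, hyB⟩ : { x // x ∈ A }) : ℕ) ∉ V :=
          fun h => False.elim ((Finset.mem_sdiff.1 hxA).2 h)
        simp only [hψ, dif_neg hxV, dif_pos hxA]
        have hsub' : (⟨((e.symm ⟨y, hyB⟩ : { x // x ∈ A }) : ℕ), hxA⟩ : { x // x ∈ A })
            = e.symm ⟨y, hyB⟩ := Subtype.ext rfl
        rw [hsub', Equiv.apply_symm_apply]
    · exact ⟨y, hψout y hy⟩
  set σ : Equiv.Perm ℕ := Equiv.ofBijective ψ ⟨hinj, hsurj⟩ with hσ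
  have hσx : ∀ x, σ x = ψ x := fun x => rfl
  have hsupp : {x | σ x ≠ x} ⊆ ↑(Finset.Icc 1 J) := by
    intro x hx
    by_contra hxn
    apply hx
    rw [hσx]
    exact hψout x (by simpa using hxn)
  have hmv := monovaryOn_a_uFn J hL a Pbar ha hP hP0 m hmono
  have hrearr := hmv.sum_mul_comp_perm_le_sum_mul (σ := σ) hsupp
  have step2 : ∑ j ∈ V, a j * uFn Pbar m (r j)
      ≤ ∑ j ∈ Finset.Icc 1 J, a j * uFn Pbar m (ψ j) := by
    rw [show ∑ j ∈ V, a j * uFn Pbar m (r j) = ∑ j ∈ V, a j * uFn Pbar m (ψ j) from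
      Finset.sum_congr rfl (fun j hj => by rw [hψV j hj])]
    apply Finset.sum_le_sum_of_subset_of_nonneg hVsub
    intro j _ _
    exact mul_nonneg (ha0 j) (uFn_nonneg Pbar hP0 m (ψ j))
  calc Phit J a Pbar C = ∑ j ∈ V, a j * Pbar (g j) := hPhit
    _ ≤ ∑ j ∈ V, a j * uFn Pbar m (r j) := step1
    _ ≤ ∑ j ∈ Finset.Icc 1 J, a j * uFn Pbar m (ψ j) := step2
    _ = ∑ j ∈ Finset.Icc 1 J, a j * uFn Pbar m (σ j) := rfl
    _ ≤ ∑ j ∈ Finset.Icc 1 J, a j * uFn Pbar m j := hrearr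
    _ = ∑ k, (∑ j ∈ blockOf m k, a j) * Pbar (m k) := sum_a_uFn J a Pbar m hmJ

end Core
section Disjointify

lemma disjointify (J L : ℕ) (hL : 0 < L) (a Pbar : ℕ → ℝ) (ha0 : ∀ j, 0 ≤ a j)
    (hP : Antitone Pbar)
    (C : Fin L → Finset ℕ) (hsub : ∀ i, C i ⊆ Finset.Icc 1 J) :
    ∃ C' : Fin L → Finset ℕ, (∀ i, C' i ⊆ Finset.Icc 1 J) ∧
      (∀ i i' : Fin L, i ≠ i' → Disjoint (C' i) (C' i')) ∧
      Phit J a Pbar C ≤ Phit J a Pbar C' := by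
  classical
  set F : ℕ → Finset (Fin L) := fun j => Finset.univ.filter (fun i => j ∈ C i) with hF
  set ι : ℕ → Fin L := fun j =>
    if h : (F j).Nonempty then ((F j).exists_mem_eq_inf' h (fun i => (C i).card)).choose
    else ⟨0, hL⟩ with hι
  have hιspec : ∀ j (h : (F j).Nonempty), ι j ∈ F j ∧
      (F j).inf' h (fun i => (C i).card) = (C (ι j)).card := by
    intro j h
    simp only [hι, dif_pos h]
    exact ((F j).exists_mem_eq_inf' h (fun i => (C i).card)).choose_spec
  set C' : Fin L → Finset ℕ := fun i =>
    (Finset.Icc 1 J).filter (fun j => (F j).Nonempty ∧ ι j = i) with hC'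
  have hmem' : ∀ i j, j ∈ C' i ↔ (j ∈ Finset.Icc 1 J ∧ (F j).Nonempty ∧ ι j = i) := by
    intro i j
    simp only [hC', Finset.mem_filter]
  have hsub' : ∀ i, C' i ⊆ Finset.Icc 1 J := fun i => Finset.filter_subset _ _
  have hdisj' : ∀ i i' : Fin L, i ≠ i' → Disjoint (C' i) (C' i') := by
    intro i i' hne
    rw [Finset.disjoint_left]
    intro j hj hj'
    rw [hmem'] at hj hj'
    exact hne (hj.2.2 ▸ hj'.2.2 ▸ rfl)
  have hsubC : ∀ i, C' i ⊆ C i := by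
    intro i j hj
    rw [hmem'] at hj
    obtain ⟨_, hcov, hi⟩ := hj
    have h1 := (hιspec j hcov).1
    rw [hF] at h1
    simp only [Finset.mem_filter] at h1
    exact hi ▸ h1.2
  refine ⟨C', hsub', hdisj', ?_⟩
  unfold Phit
  apply Finset.sum_le_sum
  intro j hj
  by_cases hcov : (F j).Nonempty
  · have hC'j : j ∈ C' (ι j) := (hmem' (ι j) j).2 ⟨hj, hcov, rfl⟩
    have hfilt' : Finset.univ.filter (fun i => j ∈ C' i) = {ι j} := by
      ext i
      simp only [Finset.mem_filter, Finset.mem_univ, true_and, Finset.mem_singleton]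
      constructor
      · intro hi
        exact ((hmem' i j).1 hi).2.2.symm
      · rintro rfl
        exact hC'j
    have hcov' : (Finset.univ.filter (fun i => j ∈ C' i)).Nonempty := by
      rw [hfilt']
      exact Finset.singleton_nonempty _
    rw [dif_pos (show (Finset.univ.filter (fun i => j ∈ C i)).Nonempty from hcov)]
    simp only [hfilt']
    rw [dif_pos (Finset.singleton_nonempty _), Finset.inf'_singleton]
    apply mul_le_mul_of_nonneg_left _ (ha0 j)
    rw [(hιspec j hcov).2]
    exact hP (Finset.card_le_card (hsubC (ι j)))
  · have hfilt' : Finset.univ.filter (fun i => j ∈ C' i) = ∅ := by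
      ext i
      simp only [Finset.mem_filter, Finset.mem_univ, true_and, Finset.notMem_empty, iff_false]
      intro hi
      exact hcov ((hmem' i j).1 hi).2.1
    rw [dif_neg (show ¬ (Finset.univ.filter (fun i => j ∈ C i)).Nonempty from hcov)]
    rw [hfilt']
    rw [dif_neg (by simp)]

end Disjointify
section Fill

lemma fill_lemma (J L : ℕ) (hL : 0 < L) (hLJ : L ≤ J) (a Pbar : ℕ → ℝ) (ha0 : ∀ j, 0 ≤ a j)
    (hP : Antitone Pbar) (hP0 : ∀ k, 0 ≤ Pbar k) :
    ∀ (n : ℕ) (C : Fin L → Finset ℕ), (∀ i, C i ⊆ Finset.Icc 1 J) →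
      (∀ i i' : Fin L, i ≠ i' → Disjoint (C i) (C i')) →
      (Finset.univ.filter (fun i => C i = ∅)).card ≤ n →
      ∃ C' : Fin L → Finset ℕ, (∀ i, C' i ⊆ Finset.Icc 1 J) ∧
        (∀ i i' : Fin L, i ≠ i' → Disjoint (C' i) (C' i')) ∧ (∀ i, (C' i).Nonempty) ∧
        Phit J a Pbar C ≤ Phit J a Pbar C' := by
  intro n
  induction n with
  | zero =>
    intro C hsub hdisj hcard
    refine ⟨C, hsub, hdisj, ?_, le_refl _⟩
    intro i
    rw [Finset.nonempty_iff_ne_empty]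
    intro hemp
    have h1 : i ∈ Finset.univ.filter (fun i => C i = ∅) := by simp [hemp]
    have h2 := Finset.card_pos.2 ⟨i, h1⟩
    omega
  | succ n ih =>
    intro C hsub hdisj hcard
    by_cases hemp : ∃ i, C i = ∅
    · obtain ⟨i₀, hi₀⟩ := hemp
      have hi₀f : i₀ ∈ Finset.univ.filter (fun i => C i = ∅) := by simp [hi₀]
      suffices h : ∃ C₂ : Fin L → Finset ℕ, (∀ i, C₂ i ⊆ Finset.Icc 1 J) ∧
          (∀ i i' : Fin L, i ≠ i' → Disjoint (C₂ i) (C₂ i')) ∧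
          (Finset.univ.filter (fun i => C₂ i = ∅)).card ≤ n ∧
          Phit J a Pbar C ≤ Phit J a Pbar C₂ by
        obtain ⟨C₂, h1, h2, h3, h4⟩ := h
        obtain ⟨C', g1, g2, g3, g4⟩ := ih C₂ h1 h2 h3
        exact ⟨C', g1, g2, g3, h4.trans g4⟩
      by_cases hbig : ∃ i₁, 2 ≤ (C i₁).card
      · -- move an element from a big block into the empty block i₀
        obtain ⟨i₁, hbig1⟩ := hbig
        obtain ⟨x, hx⟩ := Finset.card_pos.1 (by omega : 0 < (C i₁).card)
        have hne10 : i₁ ≠ i₀ := by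
          intro h
          rw [h, hi₀] at hbig1
          simp at hbig1
        have hxC : ∀ i, x ∈ C i → i = i₁ := by
          intro i hxi
          by_contra h
          exact (Finset.disjoint_left.1 (hdisj i i₁ h) hxi) hx
        set C₂ : Fin L → Finset ℕ := fun i =>
          if i = i₀ then {x} else if i = i₁ then (C i₁).erase x else C i with hC₂
        have hC₂i₀ : C₂ i₀ = {x} := by simp [hC₂]
        have hC₂i₁ : C₂ i₁ = (C i₁).erase x := by simp [hC₂, hne10]
        have hC₂other : ∀ i, i ≠ i₀ → i ≠ i₁ → C₂ i = C i := by
          intro i h1 h2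
          simp [hC₂, h1, h2]
        have hC₂sub : ∀ i, i ≠ i₀ → C₂ i ⊆ C i := by
          intro i h1
          by_cases h2 : i = i₁
          · subst h2
            rw [hC₂i₁]
            exact Finset.erase_subset _ _
          · rw [hC₂other i h1 h2]
        refine ⟨C₂, ?_, ?_, ?_, ?_⟩
        · intro i
          by_cases h1 : i = i₀
          · subst h1
            rw [hC₂i₀]
            intro j hj
            rw [Finset.mem_singleton] at hj
            exact hj ▸ hsub i₁ hx
          · exact (hC₂sub i h1).trans (hsub i)
        · intro i i' hne'
          rw [Finset.disjoint_left]
          intro j hj hj'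
          by_cases h1 : i = i₀
          · rw [h1, hC₂i₀, Finset.mem_singleton] at hj
            subst hj
            have h2 : i' ≠ i₀ := fun h => hne' (h1.trans h.symm)
            have h3 := hC₂sub i' h2 hj'
            have h4 := hxC i' h3
            rw [h4, hC₂i₁] at hj'
            exact (Finset.mem_erase.1 hj').1 rfl
          · by_cases h1' : i' = i₀
            · rw [h1', hC₂i₀, Finset.mem_singleton] at hj'
              subst hj'
              have h3 := hC₂sub i h1 hj
              have h4 := hxC i h3
              rw [h4, hC₂i₁] at hj
              exact (Finset.mem_erase.1 hj).1 rfl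
            · exact (Finset.disjoint_left.1 (hdisj i i' hne')
                (hC₂sub i h1 hj)) (hC₂sub i' h1' hj')
        · -- cardinality of empty blocks decreased
          have hfsub : Finset.univ.filter (fun i => C₂ i = ∅)
              ⊆ (Finset.univ.filter (fun i => C i = ∅)).erase i₀ := by
            intro i hi
            simp only [Finset.mem_filter, Finset.mem_univ, true_and] at hi
            rw [Finset.mem_erase]
            constructor
            · intro h
              subst h
              rw [hC₂i₀] at hi
              exact Finset.singleton_ne_empty x hi
            · simp only [Finset.mem_filter, Finset.mem_univ, true_and]
              by_cases h2 : i = i₁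
              · subst h2
                rw [hC₂i₁] at hi
                exfalso
                have := Finset.card_erase_of_mem hx
                rw [hi] at this
                simp at this
                omega
              · by_cases h1 : i = i₀
                · subst h1
                  rw [hC₂i₀] at hi
                  exact absurd hi (Finset.singleton_ne_empty x)
                · rwa [hC₂other i h1 h2] at hi
          have h5 := Finset.card_le_card hfsub
          rw [Finset.card_erase_of_mem hi₀f] at h5
          omega
        · -- Phit C ≤ Phit C₂
          unfold Phit
          apply Finset.sum_le_sum
          intro j hj
          by_cases hjx : j = x
          · subst hjx
            have hfC : Finset.univ.filter (fun i => j ∈ C i) = {i₁} := by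
              ext i
              simp only [Finset.mem_filter, Finset.mem_univ, true_and, Finset.mem_singleton]
              exact ⟨fun hi => hxC i hi, fun h => h ▸ hx⟩
            have hfC₂ : Finset.univ.filter (fun i => j ∈ C₂ i) = {i₀} := by
              ext i
              simp only [Finset.mem_filter, Finset.mem_univ, true_and, Finset.mem_singleton]
              constructor
              · intro hi
                by_contra h1
                by_cases h2 : i = i₁
                · subst h2
                  rw [hC₂i₁] at hi
                  exact (Finset.mem_erase.1 hi).1 rfl
                · rw [hC₂other i h1 h2] at hi
                  exact h2 (hxC i hi)
              · intro h
                subst h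
                rw [hC₂i₀]
                exact Finset.mem_singleton_self j
            simp only [hfC, hfC₂]
            rw [dif_pos (Finset.singleton_nonempty _), dif_pos (Finset.singleton_nonempty _),
              Finset.inf'_singleton, Finset.inf'_singleton, hC₂i₀, Finset.card_singleton]
            apply mul_le_mul_of_nonneg_left _ (ha0 j)
            exact hP (by omega)
          · have hfeq : Finset.univ.filter (fun i => j ∈ C₂ i)
                = Finset.univ.filter (fun i => j ∈ C i) := by
              ext i
              simp only [Finset.mem_filter, Finset.mem_univ, true_and]
              by_cases h1 : i = i₀
              · subst h1
                rw [hC₂i₀, hi₀]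
                simp [hjx]
              · by_cases h2 : i = i₁
                · subst h2
                  rw [hC₂i₁, Finset.mem_erase]
                  simp [hjx]
                · rw [hC₂other i h1 h2]
            by_cases hcv : (Finset.univ.filter (fun i => j ∈ C i)).Nonempty
            · have hcv₂ : (Finset.univ.filter (fun i => j ∈ C₂ i)).Nonempty := by
                rw [hfeq]; exact hcv
              rw [dif_pos hcv, dif_pos hcv₂]
              apply mul_le_mul_of_nonneg_left _ (ha0 j)
              apply hP
              obtain ⟨istar, histar, hinf⟩ := Finset.exists_mem_eq_inf' hcv (fun i => (C i).card)
              rw [hinf]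
              have histar₂ : istar ∈ Finset.univ.filter (fun i => j ∈ C₂ i) := by
                rw [hfeq]; exact histar
              have histar0 : istar ≠ i₀ := by
                intro h
                subst h
                simp only [Finset.mem_filter, hi₀, Finset.notMem_empty, and_false] at histar
              calc (Finset.univ.filter (fun i => j ∈ C₂ i)).inf' hcv₂ (fun i => (C₂ i).card)
                  ≤ (C₂ istar).card := Finset.inf'_le _ histar₂
                _ ≤ (C istar).card := Finset.card_le_card (hC₂sub istar histar0)
            · rw [dif_neg hcv, dif_neg (by rw [hfeq]; exact hcv)]
      · -- all blocks have ≤ 1 element; add a fresh uncovered item to the empty block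
        push_neg at hbig
        have hcards : ∀ i, (C i).card ≤ 1 := fun i => by have := hbig i; omega
        have hsumle : ∑ i, (C i).card ≤ L - 1 := by
          have h1 : ∑ i ∈ Finset.univ.erase i₀, (C i).card + (C i₀).card = ∑ i, (C i).card :=
            Finset.sum_erase_add _ _ (Finset.mem_univ i₀)
          have h2 : (C i₀).card = 0 := by rw [hi₀]; rfl
          have h3 : ∑ i ∈ Finset.univ.erase i₀, (C i).card
              ≤ (Finset.univ.erase i₀).card * 1 := by
            apply Finset.sum_le_card_nsmul
            intro i _
            exact hcards i
          rw [Finset.card_erase_of_mem (Finset.mem_univ i₀), Finset.card_univ,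
            Fintype.card_fin] at h3
          omega
        have hcub : (Finset.univ.biUnion C).card < J := by
          calc (Finset.univ.biUnion C).card ≤ ∑ i, (C i).card := Finset.card_biUnion_le
            _ ≤ L - 1 := hsumle
            _ < J := by omega
        have hnsub : ¬ (Finset.Icc 1 J ⊆ Finset.univ.biUnion C) := by
          intro h
          have := Finset.card_le_card h
          rw [Nat.card_Icc] at this
          omega
        obtain ⟨x, hxI, hxn⟩ := Finset.not_subset.1 hnsub
        have hxnot : ∀ i, x ∉ C i := by
          intro i hxi
          exact hxn (Finset.mem_biUnion.2 ⟨i, Finset.mem_univ i, hxi⟩)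
        set C₂ : Fin L → Finset ℕ := fun i => if i = i₀ then {x} else C i with hC₂
        have hC₂i₀ : C₂ i₀ = {x} := by simp [hC₂]
        have hC₂other : ∀ i, i ≠ i₀ → C₂ i = C i := by
          intro i h1
          simp [hC₂, h1]
        refine ⟨C₂, ?_, ?_, ?_, ?_⟩
        · intro i
          by_cases h1 : i = i₀
          · subst h1
            rw [hC₂i₀]
            intro j hj
            rw [Finset.mem_singleton] at hj
            exact hj ▸ hxI
          · rw [hC₂other i h1]
            exact hsub i
        · intro i i' hne'
          rw [Finset.disjoint_left]
          intro j hj hj'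
          by_cases h1 : i = i₀
          · rw [h1, hC₂i₀, Finset.mem_singleton] at hj
            subst hj
            have h2 : i' ≠ i₀ := fun h => hne' (h1.trans h.symm)
            rw [hC₂other i' h2] at hj'
            exact hxnot i' hj'
          · by_cases h1' : i' = i₀
            · rw [h1', hC₂i₀, Finset.mem_singleton] at hj'
              subst hj'
              rw [hC₂other i h1] at hj
              exact hxnot i hj
            · rw [hC₂other i h1] at hj
              rw [hC₂other i' h1'] at hj'
              exact (Finset.disjoint_left.1 (hdisj i i' hne') hj) hj'
        · have hfsub : Finset.univ.filter (fun i => C₂ i = ∅)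
              ⊆ (Finset.univ.filter (fun i => C i = ∅)).erase i₀ := by
            intro i hi
            simp only [Finset.mem_filter, Finset.mem_univ, true_and] at hi
            rw [Finset.mem_erase]
            constructor
            · intro h
              subst h
              rw [hC₂i₀] at hi
              exact Finset.singleton_ne_empty x hi
            · simp only [Finset.mem_filter, Finset.mem_univ, true_and]
              by_cases h1 : i = i₀
              · subst h1
                rw [hC₂i₀] at hi
                exact absurd hi (Finset.singleton_ne_empty x)
              · rwa [hC₂other i h1] at hi
          have h5 := Finset.card_le_card hfsub
          rw [Finset.card_erase_of_mem hi₀f] at h5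
          omega
        · unfold Phit
          apply Finset.sum_le_sum
          intro j hj
          by_cases hjx : j = x
          · subst hjx
            have hfC : Finset.univ.filter (fun i => j ∈ C i) = ∅ := by
              ext i
              simp [hxnot i]
            have hfC₂ : Finset.univ.filter (fun i => j ∈ C₂ i) = {i₀} := by
              ext i
              simp only [Finset.mem_filter, Finset.mem_univ, true_and, Finset.mem_singleton]
              constructor
              · intro hi
                by_contra h1
                rw [hC₂other i h1] at hi
                exact hxnot i hi
              · intro h
                subst h
                rw [hC₂i₀]
                exact Finset.mem_singleton_self j
            simp only [hfC, hfC₂]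
            rw [dif_neg (by simp), dif_pos (Finset.singleton_nonempty _),
              Finset.inf'_singleton, mul_zero]
            exact mul_nonneg (ha0 j) (hP0 _)
          · have hfeq : Finset.univ.filter (fun i => j ∈ C₂ i)
                = Finset.univ.filter (fun i => j ∈ C i) := by
              ext i
              simp only [Finset.mem_filter, Finset.mem_univ, true_and]
              by_cases h1 : i = i₀
              · subst h1
                rw [hC₂i₀, hi₀]
                simp [hjx]
              · rw [hC₂other i h1]
            by_cases hcv : (Finset.univ.filter (fun i => j ∈ C i)).Nonempty
            · have hcv₂ : (Finset.univ.filter (fun i => j ∈ C₂ i)).Nonempty := by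
                rw [hfeq]; exact hcv
              rw [dif_pos hcv, dif_pos hcv₂]
              apply mul_le_mul_of_nonneg_left _ (ha0 j)
              apply hP
              obtain ⟨istar, histar, hinf⟩ := Finset.exists_mem_eq_inf' hcv (fun i => (C i).card)
              rw [hinf]
              have histar₂ : istar ∈ Finset.univ.filter (fun i => j ∈ C₂ i) := by
                rw [hfeq]; exact histar
              have histar0 : istar ≠ i₀ := by
                intro h
                subst h
                simp only [Finset.mem_filter, hi₀, Finset.notMem_empty, and_false] at histar
              calc (Finset.univ.filter (fun i => j ∈ C₂ i)).inf' hcv₂ (fun i => (C₂ i).card)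
                  ≤ (C₂ istar).card := Finset.inf'_le _ histar₂
                _ ≤ (C istar).card := by rw [hC₂other istar histar0]
            · rw [dif_neg hcv, dif_neg (by rw [hfeq]; exact hcv)]
    · push_neg at hemp
      exact ⟨C, hsub, hdisj, fun i => hemp i, le_refl _⟩

end Fill
/-- There exists an optimal policy whose blocks are consecutive intervals of
nondecreasing sizes `1 ≤ m₁ ≤ … ≤ m_L`; hence the maximum of `P_hit` over all
policies equals the maximum over such structured policies of
`∑_k A([m₁+…+m_{k-1}+1, m₁+…+m_k]) · P̄(m_k)`. -/
theorem max_hit_structured (J L : ℕ) (hL : 1 ≤ L) (hLJ : L ≤ J)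
    (a Pbar : ℕ → ℝ) (ha0 : ∀ j, 0 ≤ a j)
    (ha : ∀ m n : ℕ, m ≤ n → a n ≤ a m)
    (hP : Antitone Pbar) (hP0 : ∀ k, 0 ≤ Pbar k) :
    ∃ m : Fin L → ℕ, (∀ i, 1 ≤ m i) ∧ Monotone m ∧ (∑ i, m i) ≤ J ∧
      Phit J a Pbar (blockOf m) =
        (∑ k : Fin L, (∑ j ∈ blockOf m k, a j) * Pbar (m k)) ∧
      ∀ C : Fin L → Finset ℕ, (∀ i, C i ⊆ Finset.Icc 1 J) →
        Phit J a Pbar C ≤ ∑ k : Fin L, (∑ j ∈ blockOf m k, a j) * Pbar (m k) := by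
  classical
  have hL0 : 0 < L := hL
  set f : (Fin L → ℕ) → ℝ := fun m => ∑ k : Fin L, (∑ j ∈ blockOf m k, a j) * Pbar (m k)
    with hf
  set S : Finset (Fin L → ℕ) :=
    (Finset.Icc (fun _ => 1) (fun _ => J)).filter
      (fun m => (∀ i, 1 ≤ m i) ∧ Monotone m ∧ ∑ i, m i ≤ J) with hS
  have hSmem : ∀ m : Fin L → ℕ, ((∀ i, 1 ≤ m i) ∧ Monotone m ∧ ∑ i, m i ≤ J) → m ∈ S := by
    intro m hm
    rw [hS, Finset.mem_filter]
    refine ⟨Finset.mem_Icc.2 ⟨fun i => hm.1 i, fun i => ?_⟩, hm⟩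
    calc m i ≤ ∑ k, m k := Finset.single_le_sum (fun k _ => Nat.zero_le _) (Finset.mem_univ i)
      _ ≤ J := hm.2.2
  have hS0 : S.Nonempty := ⟨fun _ => 1, hSmem _ ⟨fun _ => le_refl 1, monotone_const, by
    rw [Finset.sum_const, Finset.card_univ, Fintype.card_fin, smul_eq_mul, mul_one]
    exact hLJ⟩⟩
  obtain ⟨mstar, hmem, hmax⟩ := Finset.exists_max_image S f hS0
  rw [hS, Finset.mem_filter] at hmem
  obtain ⟨-, hm1, hmono, hmJ⟩ := hmem
  refine ⟨mstar, hm1, hmono, hmJ, ?_, ?_⟩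
  · rw [Phit_blockOf J a Pbar mstar, sum_a_uFn J a Pbar mstar hmJ]
  · intro C hsubC
    obtain ⟨C1, hsub1, hdisj1, hle1⟩ := disjointify J L hL0 a Pbar ha0 hP C hsubC
    obtain ⟨C2, hsub2, hdisj2, hne2, hle2⟩ := fill_lemma J L hL0 hLJ a Pbar ha0 hP hP0
      ((Finset.univ.filter (fun i => C1 i = ∅)).card) C1 hsub1 hdisj1 (le_refl _)
    obtain ⟨m, hm1', hmono', hmJ', hle3⟩ :=
      core_bound J L hL0 a Pbar ha0 ha hP hP0 C2 hsub2 hdisj2 hne2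
    have hmS : m ∈ S := hSmem m ⟨hm1', hmono', hmJ'⟩
    calc Phit J a Pbar C ≤ Phit J a Pbar C1 := hle1
      _ ≤ Phit J a Pbar C2 := hle2
      _ ≤ f m := hle3
      _ ≤ f mstar := hmax m hmS
end

section
/- If an item x belongs to the union of the blocks of a policy while some y < x (so a_y ≥ a_x) does not, then replacing x by y in every block containing x yields a policy whose hit probability is at least as large. Hence there is an optimal policy whose union of blocks equals {1,...,j_max} for some j_max. -/
lemma swap_le (J L : ℕ) (a Pbar : ℕ → ℝ)
    (ha : ∀ m n : ℕ, m ≤ n → a n ≤ a m)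
    (hP0 : ∀ k, 0 ≤ Pbar k)
    (C : Fin L → Finset ℕ) (hsub : ∀ i, C i ⊆ Finset.Icc 1 J)
    (x y : ℕ) (hy1 : 1 ≤ y) (hyx : y < x)
    (hxin : ∃ i, x ∈ C i) (hyout : ∀ i, y ∉ C i) :
    Phit J a Pbar C ≤
      Phit J a Pbar (fun i => if x ∈ C i then insert y ((C i).erase x) else C i) := by
  classical
  obtain ⟨i0, hi0⟩ := hxin
  set C' : Fin L → Finset ℕ := fun i => if x ∈ C i then insert y ((C i).erase x) else C i
    with hC'
  have hne : y ≠ x := Nat.ne_of_lt hyx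
  have hcard : ∀ i, (C' i).card = (C i).card := by
    intro i
    by_cases hx : x ∈ C i
    · have hy' : y ∉ (C i).erase x := fun h => hyout i (Finset.mem_of_mem_erase h)
      simp only [hC', if_pos hx]
      rw [Finset.card_insert_of_notMem hy', Finset.card_erase_of_mem hx]
      have : 1 ≤ (C i).card := Finset.card_pos.mpr ⟨x, hx⟩
      omega
    · simp [hC', hx]
  have hcardfun : (fun i => (C' i).card) = (fun i => (C i).card) := funext hcard
  have hmem : ∀ i j, j ≠ x → j ≠ y → (j ∈ C' i ↔ j ∈ C i) := by
    intro i j hjx hjy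
    by_cases hx : x ∈ C i <;> simp [hC', hx, hjx, hjy]
  have hmemy : ∀ i, (y ∈ C' i ↔ x ∈ C i) := by
    intro i; by_cases hx : x ∈ C i <;> simp [hC', hx, hyout i]
  have hmemx : ∀ i, x ∉ C' i := by
    intro i; by_cases hx : x ∈ C i <;> simp [hC', hx, hne.symm]
  have hxS : x ∈ Finset.Icc 1 J := hsub i0 hi0
  have hyS : y ∈ Finset.Icc 1 J :=
    Finset.mem_Icc.mpr ⟨hy1, le_trans hyx.le (Finset.mem_Icc.mp hxS).2⟩
  have hyS' : y ∈ (Finset.Icc 1 J).erase x := Finset.mem_erase.mpr ⟨hne, hyS⟩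
  unfold Phit
  rw [← Finset.add_sum_erase _ _ hxS, ← Finset.add_sum_erase _ _ hxS,
    ← Finset.add_sum_erase _ _ hyS', ← Finset.add_sum_erase _ _ hyS']
  have htail :
      ∑ j ∈ ((Finset.Icc 1 J).erase x).erase y, a j *
        (if h : (Finset.univ.filter (fun i => j ∈ C i)).Nonempty then
          Pbar ((Finset.univ.filter (fun i => j ∈ C i)).inf' h (fun i => (C i).card))
        else 0) =
      ∑ j ∈ ((Finset.Icc 1 J).erase x).erase y, a j *
        (if h : (Finset.univ.filter (fun i => j ∈ C' i)).Nonempty then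
          Pbar ((Finset.univ.filter (fun i => j ∈ C' i)).inf' h (fun i => (C' i).card))
        else 0) := by
    refine Finset.sum_congr rfl (fun j hj => ?_)
    have hjy : j ≠ y := (Finset.mem_erase.mp hj).1
    have hjx : j ≠ x := (Finset.mem_erase.mp (Finset.mem_erase.mp hj).2).1
    have hfilt : (Finset.univ.filter (fun i => j ∈ C' i)) =
        (Finset.univ.filter (fun i => j ∈ C i)) := by
      ext i; simp [hmem i j hjx hjy]
    simp only [hfilt, hcardfun]
  rw [htail]
  have hfy : Finset.univ.filter (fun i => y ∈ C' i) =
      Finset.univ.filter (fun i => x ∈ C i) := by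
    ext i; simp [hmemy i]
  have hfx' : Finset.univ.filter (fun i => x ∈ C' i) = (∅ : Finset (Fin L)) := by
    ext i; simp [hmemx i]
  have hfy0 : Finset.univ.filter (fun i => y ∈ C i) = (∅ : Finset (Fin L)) := by
    ext i; simp [hyout i]
  have hnex : (Finset.univ.filter (fun i => x ∈ C i)).Nonempty := ⟨i0, by simp [hi0]⟩
  simp only [hfy, hfx', hfy0, hcardfun, dif_pos hnex, Finset.not_nonempty_empty,
    dif_neg, not_false_iff, mul_zero, zero_add, add_zero]
  have key : a x * Pbar ((Finset.univ.filter (fun i => x ∈ C i)).inf' hnex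
        (fun i => (C i).card)) ≤
      a y * Pbar ((Finset.univ.filter (fun i => x ∈ C i)).inf' hnex
        (fun i => (C i).card)) :=
    mul_le_mul_of_nonneg_right (ha y x hyx.le) (hP0 _)
  linarith

lemma downward_interval (J : ℕ) (S : Finset ℕ) (hS : S ⊆ Finset.Icc 1 J)
    (hd : ∀ x ∈ S, ∀ y, 1 ≤ y → y < x → y ∈ S) : ∃ m, S = Finset.Icc 1 m := by
  rcases S.eq_empty_or_nonempty with h | h
  · exact ⟨0, by simp [h]⟩
  · refine ⟨S.max' h, ?_⟩
    ext j
    simp only [Finset.mem_Icc]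
    constructor
    · intro hj
      exact ⟨(Finset.mem_Icc.mp (hS hj)).1, S.le_max' j hj⟩
    · rintro ⟨h1, h2⟩
      rcases eq_or_lt_of_le h2 with h3 | h3
      · exact h3 ▸ S.max'_mem h
      · exact hd _ (S.max'_mem h) j h1 h3

/-- If `x` belongs to some block of a policy and `y < x` (hence `a y ≥ a x`)
belongs to no block, replacing `x` by `y` in every block containing `x` yields a
policy with hit probability at least as large. Hence there exists an optimal
policy whose union of blocks is `{1,…,j_max}` for some `j_max`. -/
theorem replace_by_more_popular (J L : ℕ) (a Pbar : ℕ → ℝ)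
    (ha0 : ∀ j, 0 ≤ a j) (ha : ∀ m n : ℕ, m ≤ n → a n ≤ a m)
    (hP : Antitone Pbar) (hP0 : ∀ k, 0 ≤ Pbar k)
    (C : Fin L → Finset ℕ) (hsub : ∀ i, C i ⊆ Finset.Icc 1 J)
    (x y : ℕ) (hy1 : 1 ≤ y) (hyx : y < x)
    (hxin : ∃ i, x ∈ C i) (hyout : ∀ i, y ∉ C i) :
    Phit J a Pbar C ≤
      Phit J a Pbar (fun i => if x ∈ C i then insert y ((C i).erase x) else C i) ∧
    ∃ D : Fin L → Finset ℕ, (∀ i, D i ⊆ Finset.Icc 1 J) ∧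
      (∀ E : Fin L → Finset ℕ, (∀ i, E i ⊆ Finset.Icc 1 J) →
        Phit J a Pbar E ≤ Phit J a Pbar D) ∧
      ∃ jmax : ℕ, Finset.univ.biUnion D = Finset.Icc 1 jmax := by
  classical
  refine ⟨swap_le J L a Pbar ha hP0 C hsub x y hy1 hyx hxin hyout, ?_⟩
  set T : Finset (Fin L → Finset ℕ) :=
    Fintype.piFinset (fun _ => (Finset.Icc 1 J).powerset) with hT
  have hmemT : ∀ D : Fin L → Finset ℕ, D ∈ T ↔ ∀ i, D i ⊆ Finset.Icc 1 J := by
    intro D; simp [hT, Fintype.mem_piFinset]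
  have hTne : T.Nonempty := ⟨fun _ => ∅, (hmemT _).mpr (fun i => by simp)⟩
  obtain ⟨D₀, hD₀T, hD₀max⟩ := T.exists_max_image (Phit J a Pbar) hTne
  set T' := T.filter (fun D => Phit J a Pbar D₀ ≤ Phit J a Pbar D) with hT'
  have hT'ne : T'.Nonempty := ⟨D₀, by simp [hT', hD₀T]⟩
  obtain ⟨D, hDT', hDmin⟩ :=
    T'.exists_min_image (fun D => ∑ j ∈ Finset.univ.biUnion D, j) hT'ne
  have hDT : D ∈ T := (Finset.mem_filter.mp hDT').1
  have hDge : Phit J a Pbar D₀ ≤ Phit J a Pbar D := (Finset.mem_filter.mp hDT').2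
  have hDsub : ∀ i, D i ⊆ Finset.Icc 1 J := (hmemT _).mp hDT
  refine ⟨D, hDsub, fun E hE => le_trans (hD₀max E ((hmemT _).mpr hE)) hDge, ?_⟩
  apply downward_interval J
  · intro j hj
    obtain ⟨i, _, hji⟩ := Finset.mem_biUnion.mp hj
    exact hDsub i hji
  · intro xx hx yy hy1' hylt
    by_contra hyU
    obtain ⟨i1, _, hxi⟩ := Finset.mem_biUnion.mp hx
    have hyout' : ∀ i, yy ∉ D i := fun i hyi =>
      hyU (Finset.mem_biUnion.mpr ⟨i, Finset.mem_univ i, hyi⟩)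
    have hne2 : yy ≠ xx := Nat.ne_of_lt hylt
    set D' : Fin L → Finset ℕ :=
      fun i => if xx ∈ D i then insert yy ((D i).erase xx) else D i with hD'
    have hxxIcc : xx ∈ Finset.Icc 1 J := hDsub i1 hxi
    have hyyIcc : yy ∈ Finset.Icc 1 J :=
      Finset.mem_Icc.mpr ⟨hy1', le_trans hylt.le (Finset.mem_Icc.mp hxxIcc).2⟩
    have hle := swap_le J L a Pbar ha hP0 D hDsub xx yy hy1' hylt ⟨i1, hxi⟩ hyout'
    have hD'sub : ∀ i, D' i ⊆ Finset.Icc 1 J := by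
      intro i j hj
      by_cases hxd : xx ∈ D i
      · simp only [hD', if_pos hxd, Finset.mem_insert] at hj
        rcases hj with rfl | hj
        · exact hyyIcc
        · exact hDsub i (Finset.mem_of_mem_erase hj)
      · simp only [hD', if_neg hxd] at hj
        exact hDsub i hj
    have hD'T' : D' ∈ T' := by
      rw [hT', Finset.mem_filter]
      exact ⟨(hmemT _).mpr hD'sub, le_trans hDge hle⟩
    have hUeq : Finset.univ.biUnion D' =
        insert yy ((Finset.univ.biUnion D).erase xx) := by
      ext j
      simp only [Finset.mem_biUnion, Finset.mem_univ, true_and, Finset.mem_insert,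
        Finset.mem_erase]
      by_cases hjy : j = yy
      · subst hjy
        simp only [true_or, iff_true]
        refine ⟨i1, ?_⟩
        simp [hD', hxi]
      · by_cases hjx : j = xx
        · have hxD' : ∀ i, xx ∉ D' i := by
            intro i
            by_cases hxd : xx ∈ D i <;> simp [hD', hxd, Ne.symm hne2]
          simp only [hjx]
          constructor
          · rintro ⟨i, hi⟩
            exact absurd hi (hxD' i)
          · rintro (h | h)
            · exact absurd h (Ne.symm hne2)
            · exact absurd rfl h.1
        · constructor
          · rintro ⟨i, hi⟩
            by_cases hxd : xx ∈ D i
            · simp only [hD', if_pos hxd, Finset.mem_insert, Finset.mem_erase] at hi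
              rcases hi with rfl | hi
              · exact absurd rfl hjy
              · exact Or.inr ⟨hjx, i, hi.2⟩
            · simp only [hD', if_neg hxd] at hi
              exact Or.inr ⟨hjx, i, hi⟩
          · rintro (h | ⟨_, i, hi⟩)
            · exact absurd h hjy
            · refine ⟨i, ?_⟩
              by_cases hxd : xx ∈ D i <;> simp [hD', hxd, hjx, hjy, hi]
    have hmin := hDmin D' hD'T'
    rw [hUeq] at hmin
    have hyne : yy ∉ (Finset.univ.biUnion D).erase xx := fun h =>
      hyU (Finset.mem_of_mem_erase h)
    rw [Finset.sum_insert hyne] at hmin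
    rw [← Finset.add_sum_erase _ _ hx] at hmin
    omega
end

section
/- The set function F on finite families S of blocks, F(S) := Σ_{j=1}^J a_j · P̄(min{|C| : C ∈ S, j ∈ C}) (min ∅ = ∞, P̄(∞) = 0), is submodular: for any block C and families S ⊆ T, F(S ∪ {C}) − F(S) ≥ F(T ∪ {C}) − F(T). -/
noncomputable def Fhit (J : ℕ) (a Pbar : ℕ → ℝ) (S : Finset (Finset ℕ)) : ℝ :=
  ∑ j ∈ Finset.Icc 1 J, a j *
    (if h : (S.filter (fun C => j ∈ C)).Nonempty then
      Pbar ((S.filter (fun C => j ∈ C)).inf' h Finset.card)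
    else 0)

private lemma aux_ineq (Pbar : ℕ → ℝ) (hP : Antitone Pbar) {c mS mT : ℕ} (h : mT ≤ mS) :
    Pbar (min c mT) - Pbar mT ≤ Pbar (min c mS) - Pbar mS := by
  rcases le_total mS c with h1 | h1
  · rw [min_eq_right h1, min_eq_right (h.trans h1)]; simp
  · rw [min_eq_left h1]
    rcases le_total mT c with h2 | h2
    · rw [min_eq_right h2]
      have := hP h1
      linarith
    · rw [min_eq_left h2]
      have := hP h
      linarith

/-- The set function `F` is submodular: for any block `C` and families `S ⊆ T`,
`F(S ∪ {C}) − F(S) ≥ F(T ∪ {C}) − F(T)`. -/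
theorem Fhit_submodular (J : ℕ) (a Pbar : ℕ → ℝ)
    (ha : ∀ j, 0 ≤ a j) (hP : Antitone Pbar) (hP0 : ∀ k, 0 ≤ Pbar k)
    (S T : Finset (Finset ℕ)) (hST : S ⊆ T)
    (hT : ∀ B ∈ T, B.Nonempty ∧ B ⊆ Finset.Icc 1 J)
    (C : Finset ℕ) (hC : C.Nonempty) (hCJ : C ⊆ Finset.Icc 1 J) :
    Fhit J a Pbar (insert C T) - Fhit J a Pbar T ≤
      Fhit J a Pbar (insert C S) - Fhit J a Pbar S := by
  rw [Fhit, Fhit, Fhit, Fhit, ← Finset.sum_sub_distrib, ← Finset.sum_sub_distrib]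
  apply Finset.sum_le_sum
  intro j hj
  rw [← mul_sub, ← mul_sub]
  apply mul_le_mul_of_nonneg_left _ (ha j)
  by_cases hjC : j ∈ C
  · rw [Finset.filter_insert, Finset.filter_insert, if_pos hjC, if_pos hjC]
    by_cases hS : (S.filter (fun C => j ∈ C)).Nonempty
    · have hT' : (T.filter (fun C => j ∈ C)).Nonempty :=
        hS.mono (Finset.filter_subset_filter _ hST)
      have hmono : (T.filter (fun C => j ∈ C)).inf' hT' Finset.card ≤
          (S.filter (fun C => j ∈ C)).inf' hS Finset.card := by
        apply Finset.le_inf'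
        intro b hb
        exact Finset.inf'_le _ (Finset.filter_subset_filter _ hST hb)
      rw [dif_pos hS, dif_pos hT',
        dif_pos (Finset.insert_nonempty _ _), dif_pos (Finset.insert_nonempty _ _),
        Finset.inf'_insert hS, Finset.inf'_insert hT']
      exact aux_ineq Pbar hP hmono
    · rw [dif_neg hS, dif_pos (Finset.insert_nonempty _ _)]
      have hSempty : S.filter (fun C => j ∈ C) = ∅ := Finset.not_nonempty_iff_eq_empty.mp hS
      rw [hSempty]
      simp only [Finset.insert_empty, Finset.inf'_singleton]
      by_cases hT' : (T.filter (fun C => j ∈ C)).Nonempty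
      · rw [dif_pos hT']
        simp only [Finset.singleton_nonempty, ↓reduceDIte]
        rw [Finset.inf'_insert hT']
        set mT := (T.filter (fun C => j ∈ C)).inf' hT' Finset.card
        rcases le_total mT C.card with h2 | h2
        · rw [min_eq_right h2]
          have := hP0 C.card
          linarith
        · rw [min_eq_left h2]
          have := hP0 mT
          linarith
      · have hTempty : T.filter (fun C => j ∈ C) = ∅ := Finset.not_nonempty_iff_eq_empty.mp hT'
        rw [dif_neg hT', hTempty]
        simp only [Finset.insert_empty, Finset.inf'_singleton,
          dif_pos (Finset.singleton_nonempty C)]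
        exact le_refl _
  · rw [Finset.filter_insert, Finset.filter_insert, if_neg hjC, if_neg hjC]
    simp
end

section
/- The marginal gain of adding a block C to a family S, namely F(S ∪ {C}) − F(S), equals Σ_{j ∈ C} a_j · (P̄(|C|) − P̄(min{|C'| : C' ∈ S, j ∈ C'}))⁺, where x⁺ = max(x,0). -/
/-- Marginal gain formula:
`F(S ∪ {C}) − F(S) = ∑_{j ∈ C} a_j · (P̄(|C|) − P̄(min{|C'| : C' ∈ S, j ∈ C'}))⁺`. -/
theorem Fhit_marginal_gain (J : ℕ) (a Pbar : ℕ → ℝ)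
    (ha : ∀ j, 0 ≤ a j) (hP : Antitone Pbar) (hP0 : ∀ k, 0 ≤ Pbar k)
    (S : Finset (Finset ℕ)) (C : Finset ℕ) (hCJ : C ⊆ Finset.Icc 1 J) :
    Fhit J a Pbar (insert C S) - Fhit J a Pbar S =
      ∑ j ∈ C, a j *
        max (Pbar C.card -
          (if h : (S.filter (fun C' => j ∈ C')).Nonempty then
            Pbar ((S.filter (fun C' => j ∈ C')).inf' h Finset.card)
          else 0)) 0 := by
  unfold Fhit
  rw [← Finset.sum_sub_distrib]
  rw [← Finset.sum_subset hCJ]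
  apply Finset.sum_congr rfl
  intro j hj
  rw [← mul_sub]
  congr 1
  have hfi : (insert C S).filter (fun C' => j ∈ C') = insert C (S.filter (fun C' => j ∈ C')) := by
    rw [Finset.filter_insert, if_pos hj]
  by_cases hS : (S.filter (fun C' => j ∈ C')).Nonempty
  · rw [dif_pos hS]
    have hne : ((insert C S).filter (fun C' => j ∈ C')).Nonempty := by
      rw [hfi]; exact Finset.insert_nonempty _ _
    rw [dif_pos hne]
    have : ((insert C S).filter (fun C' => j ∈ C')).inf' hne Finset.card
        = C.card ⊓ (S.filter (fun C' => j ∈ C')).inf' hS Finset.card := by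
      rw [Finset.inf'_congr hne hfi (fun _ _ => rfl)]
      exact Finset.inf'_insert (s := S.filter (fun C' => j ∈ C')) (H := hS) (f := Finset.card) (b := C)
    rw [this]
    set m := (S.filter (fun C' => j ∈ C')).inf' hS Finset.card with hm
    rcases le_total C.card m with h | h
    · rw [min_eq_left h, max_eq_left (by linarith [hP h])]
    · rw [min_eq_right h, max_eq_right (by linarith [hP h]), sub_self]
  · rw [dif_neg hS]
    have he : S.filter (fun C' => j ∈ C') = ∅ := Finset.not_nonempty_iff_eq_empty.mp hS
    have hne : ((insert C S).filter (fun C' => j ∈ C')).Nonempty := by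
      rw [hfi]; exact Finset.insert_nonempty _ _
    rw [dif_pos hne]
    have : ((insert C S).filter (fun C' => j ∈ C')).inf' hne Finset.card = C.card := by
      simp_rw [hfi, he]; simp
    rw [this, sub_zero]; exact (max_eq_left (hP0 _)).symm
  · intro x hx hxC
    have hfi : (insert C S).filter (fun C' => x ∈ C') = S.filter (fun C' => x ∈ C') := by
      rw [Finset.filter_insert, if_neg hxC]
    rw [hfi]; simp
end

section
/- If the coverage distribution satisfies the 1-coverage condition p_k = 0 for all k ≥ 2 (equivalently P̄(k) = 0 for k ≥ 2), then the policy caching the L most popular items in singleton blocks, C_i = {i} for i = 1,...,L, maximizes the hit probability, and the maximal hit probability equals P̄(1) · Σ_{j=1}^L a_j. -/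
lemma aux_sum_top (a : ℕ → ℝ) (ha : ∀ m n : ℕ, m ≤ n → a n ≤ a m) :
    ∀ n (S : Finset ℕ), S.card = n → (∀ j ∈ S, 1 ≤ j) →
      ∑ j ∈ S, a j ≤ ∑ k ∈ Finset.Icc 1 n, a k := by
  intro n
  induction n with
  | zero => intro S hc _; simp [Finset.card_eq_zero.mp hc]
  | succ n ih =>
    intro S hc h1
    have hne : S.Nonempty := Finset.card_pos.mp (by omega)
    set m := S.max' hne with hm
    have hmS : m ∈ S := S.max'_mem hne
    have hsub : S ⊆ Finset.Icc 1 m := fun x hx =>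
      Finset.mem_Icc.mpr ⟨h1 x hx, S.le_max' x hx⟩
    have hcard : n + 1 ≤ m := by
      have := Finset.card_le_card hsub
      simp [hc, Nat.card_Icc] at this
      omega
    have herase : (S.erase m).card = n := by
      rw [Finset.card_erase_of_mem hmS, hc]
      omega
    have h1' : ∀ j ∈ S.erase m, 1 ≤ j := fun j hj => h1 j (Finset.mem_of_mem_erase hj)
    have hsum : ∑ j ∈ S, a j = a m + ∑ j ∈ S.erase m, a j :=
      (Finset.add_sum_erase _ _ hmS).symm
    rw [hsum, Finset.sum_Icc_succ_top (by omega : 1 ≤ n + 1)]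
    have hih := ih (S.erase m) herase h1'
    have ham : a m ≤ a (n + 1) := ha _ _ hcard
    linarith

/-- Under 1-coverage (`P̄(k) = 0` for `k ≥ 2`), caching the `L` most popular items in
singleton blocks `C_i = {i}` is optimal, and the maximal hit probability is
`P̄(1) · ∑_{j=1}^L a_j`. -/
theorem most_popular_optimal_one_coverage (J L : ℕ) (hLJ : L ≤ J)
    (a Pbar : ℕ → ℝ) (ha0 : ∀ j, 0 ≤ a j)
    (ha : ∀ m n : ℕ, m ≤ n → a n ≤ a m)
    (hP : Antitone Pbar) (hP0 : ∀ k, 0 ≤ Pbar k)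
    (hone : ∀ k, 2 ≤ k → Pbar k = 0) :
    (∀ D : Fin L → Finset ℕ, (∀ i, D i ⊆ Finset.Icc 1 J) →
      Phit J a Pbar D ≤ Phit J a Pbar (fun i : Fin L => {(i : ℕ) + 1})) ∧
    Phit J a Pbar (fun i : Fin L => {(i : ℕ) + 1}) =
      Pbar 1 * ∑ j ∈ Finset.Icc 1 L, a j := by
  classical
  have hsing : Phit J a Pbar (fun i : Fin L => {(i : ℕ) + 1}) =
      Pbar 1 * ∑ j ∈ Finset.Icc 1 L, a j := by
    unfold Phit
    rw [Finset.mul_sum]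
    rw [← Finset.sum_subset (Finset.Icc_subset_Icc_right hLJ)]
    · apply Finset.sum_congr rfl
      intro j hj
      rw [Finset.mem_Icc] at hj
      have hne : (Finset.univ.filter
          (fun i : Fin L => j ∈ ({(i : ℕ) + 1} : Finset ℕ))).Nonempty := by
        refine ⟨⟨j - 1, by omega⟩, ?_⟩
        simp
        omega
      rw [dif_pos hne]
      have : (Finset.univ.filter
          (fun i : Fin L => j ∈ ({(i : ℕ) + 1} : Finset ℕ))).inf' hne
            (fun i => ({(i : ℕ) + 1} : Finset ℕ).card) = 1 := by
        simp
      rw [this]; ring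
    · intro j hjJ hjL
      rw [Finset.mem_Icc] at hjJ hjL
      have hempty : ¬ (Finset.univ.filter
          (fun i : Fin L => j ∈ ({(i : ℕ) + 1} : Finset ℕ))).Nonempty := by
        rintro ⟨i, hi⟩
        simp at hi
        have := i.isLt
        omega
      rw [dif_neg hempty, mul_zero]
  refine ⟨?_, hsing⟩
  intro D hD
  rw [hsing]
  set S : Finset ℕ := (Finset.Icc 1 J).filter (fun j => ∃ i, D i = {j}) with hS
  have key : Phit J a Pbar D ≤ ∑ j ∈ Finset.Icc 1 J,
      (if ∃ i, D i = {j} then Pbar 1 * a j else 0) := by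
    apply Finset.sum_le_sum
    intro j hj
    by_cases h : (Finset.univ.filter (fun i : Fin L => j ∈ D i)).Nonempty
    · rw [dif_pos h]
      obtain ⟨i, hi, hinf⟩ := Finset.exists_mem_eq_inf'
        h (fun i : Fin L => (D i).card)
      rw [hinf]
      have hji : j ∈ D i := by simpa using hi
      have hc1 : 1 ≤ (D i).card := Finset.card_pos.mpr ⟨j, hji⟩
      rcases Nat.lt_or_ge (D i).card 2 with hlt | hge
      · have hc : (D i).card = 1 := by omega
        obtain ⟨x, hx⟩ := Finset.card_eq_one.mp hc
        have hxj : x = j := by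
          rw [hx, Finset.mem_singleton] at hji
          exact hji.symm
        have hex : ∃ i', D i' = {j} := ⟨i, by rw [hx, hxj]⟩
        rw [if_pos hex, hc]
        have := mul_le_mul_of_nonneg_right (le_refl (Pbar 1)) (ha0 j)
        linarith [mul_comm (a j) (Pbar 1)]
      · rw [hone _ hge, mul_zero]
        split
        · exact mul_nonneg (hP0 1) (ha0 j)
        · exact le_refl 0
    · rw [dif_neg h, mul_zero]
      split
      · exact mul_nonneg (hP0 1) (ha0 j)
      · exact le_refl 0
  refine key.trans ?_
  rw [← Finset.sum_filter, ← hS, ← Finset.mul_sum]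
  have hScard : S.card ≤ L := by
    rcases Nat.eq_zero_or_pos L with hL0 | hLpos
    · have : S = ∅ := by
        subst hL0
        apply Finset.filter_false_of_mem
        intro j _
        rintro ⟨i, -⟩
        exact i.elim0
      simp [this]
    · haveI : Nonempty (Fin L) := ⟨⟨0, hLpos⟩⟩
      have : S.card ≤ (Finset.univ : Finset (Fin L)).card := by
        apply Finset.card_le_card_of_injOn
          (fun j => if h : ∃ i, D i = {j} then h.choose else Classical.arbitrary _)
        · intro j _; exact Finset.mem_univ _
        · intro j1 hj1 j2 hj2 heq
          have h1 : ∃ i, D i = {j1} := (Finset.mem_filter.mp hj1).2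
          have h2 : ∃ i, D i = {j2} := (Finset.mem_filter.mp hj2).2
          simp only [dif_pos h1, dif_pos h2] at heq
          have e1 := h1.choose_spec
          have e2 := h2.choose_spec
          rw [heq, e2] at e1
          exact (Finset.singleton_injective e1).symm
      simpa using this
  have h1S : ∀ j ∈ S, 1 ≤ j := fun j hj =>
    (Finset.mem_Icc.mp (Finset.mem_filter.mp hj).1).1
  have hsum1 : ∑ j ∈ S, a j ≤ ∑ k ∈ Finset.Icc 1 S.card, a k :=
    aux_sum_top a ha S.card S rfl h1S
  have hsum2 : ∑ k ∈ Finset.Icc 1 S.card, a k ≤ ∑ k ∈ Finset.Icc 1 L, a k :=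
    Finset.sum_le_sum_of_subset_of_nonneg
      (Finset.Icc_subset_Icc_right hScard) (fun k _ _ => ha0 k)
  have := hsum1.trans hsum2
  exact mul_le_mul_of_nonneg_left this (hP0 1)
end
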